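/- arXiv:2209.13862 — 2 statements merged into one kernel-verified Lean document; each statement's English description precedes it below -/
import Mathlib

section
/- Let P_{XY} be a joint pmf on finite alphabets 𝒳×𝒴 with P_X(x)>0 for every x∈𝒳. Let g:[0,1]→[0,∞) be a concave function with g(0)=0 that is differentiable at 0 with 0 < g′(0) < ∞. Then the maximal g-leakage equals the maximal leakage: sup over finite alphabets 𝒰 and channels P_{U|X} of log[ (sup over families of pmfs (P̂_y)_{y∈𝒴} on 𝒰 of Σ_{u,y} P_{UY}(u,y)g(P̂_y(u))) / (sup over pmfs P̂ on 𝒰 of Σ_u P_U(u)g(P̂(u))) ] = log Σ_{y∈𝒴} max_{x∈𝒳} P_{Y|X}(y|x). -/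
open Finset

/-- A probability mass function on a finite type. -/
def IsPMF {α : Type*} [Fintype α] (p : α → ℝ) : Prop :=
  (∀ a, 0 ≤ p a) ∧ ∑ a, p a = 1

/-- A channel (row-stochastic kernel). -/
def IsChannel {X U : Type*} [Fintype U] (K : X → U → ℝ) : Prop :=
  ∀ x, IsPMF (K x)

/-- The pmf induced on `U` by a pmf `P` on `X` and a channel `K`. -/
noncomputable def push {X U : Type*} [Fintype X] (P : X → ℝ) (K : X → U → ℝ) : U → ℝ :=
  fun u => ∑ x, P x * K x u

/-- The maximal expected gain `sup_{P̂} ∑_u R(u) g(P̂(u))` of a guessing adversary. -/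
noncomputable def maxGain {U : Type*} [Fintype U] (g : ℝ → ℝ) (R : U → ℝ) : ℝ :=
  sSup {v : ℝ | ∃ Ph : U → ℝ, IsPMF Ph ∧ v = ∑ u, R u * g (Ph u)}

/-- The maximal posterior expected gain, over families `(P̂_y)_y` of guessing pmfs, for a joint
distribution `R(u,y)` on `U × Y`. -/
noncomputable def maxGainFam {Y U : Type*} [Fintype Y] [Fintype U]
    (g : ℝ → ℝ) (R : U → Y → ℝ) : ℝ :=
  sSup {v : ℝ | ∃ Ph : Y → U → ℝ, (∀ y, IsPMF (Ph y)) ∧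
    v = ∑ y, ∑ u, R u y * g (Ph y u)}

/-- The ratio of posterior to prior maximal expected gains for a gain function `g`,
a joint pmf `P` on `X × Y` and a channel `K = P_{U|X}`. -/
noncomputable def gRatio {X Y U : Type*} [Fintype X] [Fintype Y] [Fintype U]
    (g : ℝ → ℝ) (P : X → Y → ℝ) (K : X → U → ℝ) : ℝ :=
  maxGainFam g (fun u y => ∑ x, K x u * P x y) /
    maxGain g (push (fun x => ∑ y, P x y) K)

/-!
Write `m y = max_x P(y|x)`. Since `P(x,y) ≤ m y · P_X(x)`, every channel satisfies
`P_{UY}(u,y) ≤ m y · P_U(u)`, so seeing `y` multiplies the optimal expected gain by at most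
`∑_y m y`.

Conversely, concavity gives `g t ≤ g'(0) t`, with near equality for small `t`. Splitting each `x`
uniformly over `n x ≈ N · P_X(x)` outputs makes every `P_U(u) ≈ 1/N`, so the blind gain is at most
`≈ g'(0)/N`; after seeing `y`, guessing uniformly on the outputs of a maximizer of `P(y|x)` gains
`≈ g'(0) · m y / N`. Letting `N → ∞` the ratio approaches `∑_y m y`.
-/

open Filter Topology

theorem Real.log_le_log_of_one_le {a b : ℝ} (ha : 0 ≤ a) (hab : a ≤ b) (hb : 1 ≤ b) :
    Real.log a ≤ Real.log b := by
  rcases ha.eq_or_lt with rfl | ha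
  · simpa using Real.log_nonneg hb
  · exact Real.log_le_log ha hab

theorem ConcaveOn.le_mul_of_hasDerivWithinAt {S : Set ℝ} {g : ℝ → ℝ} {d t : ℝ}
    (hgc : ConcaveOn ℝ S g) (h0S : 0 ∈ S) (hg0 : g 0 = 0) (hgd : HasDerivWithinAt g d S 0)
    (htS : t ∈ S) (ht : 0 ≤ t) : g t ≤ d * t := by
  rcases ht.eq_or_lt with rfl | ht
  · simp [hg0]
  have hslope := hgc.slope_le_of_hasDerivWithinAt h0S htS ht hgd
  rw [slope_def_field, hg0, sub_zero, sub_zero, div_le_iff₀ ht] at hslope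
  linarith

theorem HasDerivWithinAt.eventually_mul_lt {g : ℝ → ℝ} {c d : ℝ}
    (hgd : HasDerivWithinAt g d (Set.Ioi 0) 0) (hg0 : g 0 = 0) (hcd : c < d) :
    ∀ᶠ t in 𝓝[>] 0, c * t < g t := by
  have hslope := (hasDerivWithinAt_iff_tendsto_slope' (lt_irrefl 0)).mp hgd
  filter_upwards [hslope.eventually_const_lt hcd, self_mem_nhdsWithin] with t ht (ht0 : 0 < t)
  rwa [slope_def_field, hg0, sub_zero, sub_zero, lt_div_iff₀ ht0] at ht

theorem IsPMF.le_one {U : Type*} [Fintype U] {p : U → ℝ} (hp : IsPMF p) (u : U) : p u ≤ 1 :=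
  hp.2 ▸ single_le_sum (fun a _ => hp.1 a) (mem_univ u)

section Gain

variable {U Y : Type*} [Fintype U] [Fintype Y] {g : ℝ → ℝ} {d : ℝ}

theorem sum_mul_gain_le (hgle : ∀ t ∈ Set.Icc (0:ℝ) 1, g t ≤ d * t) (hd : 0 ≤ d)
    {R : U → ℝ} {c : ℝ} (hR : ∀ u, 0 ≤ R u) (hRc : ∀ u, R u ≤ c) {p : U → ℝ} (hp : IsPMF p) :
    ∑ u, R u * g (p u) ≤ d * c :=
  calc ∑ u, R u * g (p u) ≤ ∑ u, c * (d * p u) :=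
        sum_le_sum fun u _ =>
          (mul_le_mul_of_nonneg_left (hgle _ ⟨hp.1 u, hp.le_one u⟩) (hR u)).trans
          (mul_le_mul_of_nonneg_right (hRc u) (mul_nonneg hd (hp.1 u)))
    _ = d * c := by rw [← mul_sum, ← mul_sum, hp.2]; ring

theorem le_maxGain (hgle : ∀ t ∈ Set.Icc (0:ℝ) 1, g t ≤ d * t) (hd : 0 ≤ d)
    {R : U → ℝ} (hR : ∀ u, 0 ≤ R u) {p : U → ℝ} (hp : IsPMF p) :
    ∑ u, R u * g (p u) ≤ maxGain g R := by
  refine le_csSup ⟨d * ∑ u, R u, ?_⟩ ⟨p, hp, rfl⟩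
  rintro v ⟨q, hq, rfl⟩
  exact sum_mul_gain_le hgle hd hR (fun u => single_le_sum (fun a _ => hR a) (mem_univ u)) hq

theorem maxGain_le (hgle : ∀ t ∈ Set.Icc (0:ℝ) 1, g t ≤ d * t) (hd : 0 ≤ d)
    {R : U → ℝ} {c : ℝ} (hR : ∀ u, 0 ≤ R u) (hRc : ∀ u, R u ≤ c) (hc : 0 ≤ c) :
    maxGain g R ≤ d * c :=
  Real.sSup_le (by rintro v ⟨p, hp, rfl⟩; exact sum_mul_gain_le hgle hd hR hRc hp)
    (mul_nonneg hd hc)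

theorem maxGain_nonneg (hgnn : ∀ t ∈ Set.Icc (0:ℝ) 1, 0 ≤ g t) {R : U → ℝ}
    (hR : ∀ u, 0 ≤ R u) : 0 ≤ maxGain g R :=
  Real.sSup_nonneg <| by
    rintro v ⟨p, hp, rfl⟩
    exact sum_nonneg fun u _ => mul_nonneg (hR u) (hgnn _ ⟨hp.1 u, hp.le_one u⟩)

theorem maxGainFam_nonneg (hgnn : ∀ t ∈ Set.Icc (0:ℝ) 1, 0 ≤ g t) {R : U → Y → ℝ}
    (hR : ∀ u y, 0 ≤ R u y) :
    0 ≤ maxGainFam g R :=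
  Real.sSup_nonneg <| by
    rintro v ⟨p, hp, rfl⟩
    exact sum_nonneg fun y _ => sum_nonneg fun u _ =>
      mul_nonneg (hR u y) (hgnn _ ⟨(hp y).1 u, (hp y).le_one u⟩)

theorem le_maxGainFam (hgle : ∀ t ∈ Set.Icc (0:ℝ) 1, g t ≤ d * t) (hd : 0 ≤ d)
    {R : U → Y → ℝ} (hR : ∀ u y, 0 ≤ R u y) {p : Y → U → ℝ} (hp : ∀ y, IsPMF (p y)) :
    ∑ y, ∑ u, R u y * g (p y u) ≤ maxGainFam g R := by
  refine le_csSup ⟨∑ y, d * ∑ u, R u y, ?_⟩ ⟨p, hp, rfl⟩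
  rintro v ⟨q, hq, rfl⟩
  exact sum_le_sum fun y _ => sum_mul_gain_le hgle hd (hR · y)
    (fun u => single_le_sum (fun a _ => hR a y) (mem_univ u)) (hq y)

theorem maxGainFam_le_sum_mul_maxGain (hgnn : ∀ t ∈ Set.Icc (0:ℝ) 1, 0 ≤ g t)
    (hgle : ∀ t ∈ Set.Icc (0:ℝ) 1, g t ≤ d * t) (hd : 0 ≤ d)
    {R : U → Y → ℝ} {S : U → ℝ} {m : Y → ℝ} (hS : ∀ u, 0 ≤ S u) (hm : ∀ y, 0 ≤ m y)
    (hRS : ∀ u y, R u y ≤ m y * S u) :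
    maxGainFam g R ≤ (∑ y, m y) * maxGain g S := by
  refine Real.sSup_le ?_ (mul_nonneg (sum_nonneg fun y _ => hm y) (maxGain_nonneg hgnn hS))
  rintro v ⟨p, hp, rfl⟩
  rw [sum_mul]
  refine sum_le_sum fun y _ => ?_
  calc ∑ u, R u y * g (p y u) ≤ ∑ u, m y * S u * g (p y u) := by
        gcongr with u
        · exact hgnn _ ⟨(hp y).1 u, (hp y).le_one u⟩
        · exact hRS u y
    _ = m y * ∑ u, S u * g (p y u) := by rw [mul_sum]; simp only [mul_assoc]
    _ ≤ m y * maxGain g S := by gcongr; exacts [hm y, le_maxGain hgle hd hS (hp y)]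

end Gain

section UpperBound

variable {X Y U : Type*} [Fintype X] [Fintype U]

theorem push_nonneg {Q : X → ℝ} (hQ : ∀ x, 0 ≤ Q x) {K : X → U → ℝ} (hK : IsChannel K) (u : U) :
    0 ≤ push Q K u :=
  sum_nonneg fun x _ => mul_nonneg (hQ x) ((hK x).1 u)

theorem sum_channel_mul_le_mul_push {P : X → Y → ℝ} {Q : X → ℝ} {m : Y → ℝ} {K : X → U → ℝ}
    (hK : IsChannel K) (hPm : ∀ x y, P x y ≤ m y * Q x) (u : U) (y : Y) :
    ∑ x, K x u * P x y ≤ m y * push Q K u := by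
  rw [push, mul_sum]
  refine sum_le_sum fun x _ => ?_
  calc K x u * P x y ≤ K x u * (m y * Q x) := mul_le_mul_of_nonneg_left (hPm x y) ((hK x).1 u)
    _ = m y * (Q x * K x u) := by ring

variable [Fintype Y]

theorem gRatio_nonneg {g : ℝ → ℝ} (hgnn : ∀ t ∈ Set.Icc (0:ℝ) 1, 0 ≤ g t)
    {P : X → Y → ℝ} (hP : ∀ x y, 0 ≤ P x y) {K : X → U → ℝ} (hK : IsChannel K) :
    0 ≤ gRatio g P K :=
  div_nonneg
    (maxGainFam_nonneg hgnn fun u y => sum_nonneg fun x _ => mul_nonneg ((hK x).1 u) (hP x y))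
    (maxGain_nonneg hgnn (push_nonneg (fun x => sum_nonneg fun y _ => hP x y) hK))

theorem gRatio_le_sum {g : ℝ → ℝ} {d : ℝ} (hgnn : ∀ t ∈ Set.Icc (0:ℝ) 1, 0 ≤ g t)
    (hgle : ∀ t ∈ Set.Icc (0:ℝ) 1, g t ≤ d * t) (hd : 0 ≤ d)
    {P : X → Y → ℝ} (hP : ∀ x y, 0 ≤ P x y) {m : Y → ℝ} (hm : ∀ y, 0 ≤ m y)
    (hPm : ∀ x y, P x y ≤ m y * ∑ y', P x y') {K : X → U → ℝ} (hK : IsChannel K) :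
    gRatio g P K ≤ ∑ y, m y := by
  have hPU := push_nonneg (Q := fun x => ∑ y, P x y) (fun x => sum_nonneg fun y _ => hP x y) hK
  exact div_le_of_le_mul₀ (maxGain_nonneg hgnn hPU) (sum_nonneg fun y _ => hm y)
    (maxGainFam_le_sum_mul_maxGain hgnn hgle hd hPU hm (sum_channel_mul_le_mul_push hK hPm))

end UpperBound

section MaxLeakage

variable {X Y : Type*} [Fintype X] [Fintype Y] [Nonempty X] {P : X → Y → ℝ}

theorem le_sup'_div_mul (hPX : ∀ x, 0 < ∑ y, P x y) (x : X) (y : Y) :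
    P x y ≤ univ.sup' univ_nonempty (fun x => P x y / ∑ y', P x y') * ∑ y', P x y' :=
  (div_le_iff₀ (hPX x)).1 (le_sup' (fun x => P x y / ∑ y', P x y') (mem_univ x))

theorem sup'_div_nonneg (hP : ∀ x y, 0 ≤ P x y) (y : Y) :
    0 ≤ univ.sup' univ_nonempty (fun x => P x y / ∑ y', P x y') :=
  let x := Classical.arbitrary X
  (div_nonneg (hP x y) (sum_nonneg fun y' _ => hP x y')).trans
    (le_sup' (fun x => P x y / ∑ y', P x y') (mem_univ x))

theorem one_le_sum_sup'_div (hPX : ∀ x, 0 < ∑ y, P x y) :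
    1 ≤ ∑ y, univ.sup' univ_nonempty (fun x => P x y / ∑ y', P x y') := by
  let x := Classical.arbitrary X
  calc (1 : ℝ) = ∑ y, P x y / ∑ y', P x y' := by rw [← sum_div, div_self (hPX x).ne']
    _ ≤ _ := sum_le_sum fun y _ => le_sup' (fun x => P x y / ∑ y', P x y') (mem_univ x)

end MaxLeakage

section Splitting

variable {X : Type*} [Fintype X] [DecidableEq X] (n : X → ℕ)

noncomputable def splitChannel (x : X) (u : Σ x, Fin (n x)) : ℝ :=
  if u.1 = x then (n x : ℝ)⁻¹ else 0

theorem isChannel_splitChannel (hn : ∀ x, n x ≠ 0) : IsChannel (splitChannel n) := by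
  intro x
  refine ⟨fun u => by unfold splitChannel; split_ifs <;> positivity, ?_⟩
  rw [Fintype.sum_sigma, sum_eq_single x (fun x' _ hx' => by simp [splitChannel, hx'])
    (by simp)]
  simp [splitChannel, hn x]

theorem sum_mul_splitChannel (F : X → ℝ) (u : Σ x, Fin (n x)) :
    ∑ x, F x * splitChannel n x u = F u.1 / n u.1 := by
  rw [sum_eq_single u.1 (fun x _ hx => by simp [splitChannel, Ne.symm hx]) (by simp)]
  simp [splitChannel, div_eq_mul_inv]

theorem sum_div_mul_splitChannel {g : ℝ → ℝ} (hg0 : g 0 = 0) (F : X → ℝ) (x : X) :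
    ∑ u : Σ x, Fin (n x), F u.1 / n u.1 * g (splitChannel n x u) = F x * g (n x)⁻¹ := by
  rw [Fintype.sum_sigma, sum_eq_single x (fun x' _ hx' => by simp [splitChannel, hx', hg0])
    (by simp)]
  rcases eq_or_ne (n x) 0 with hx | hx
  · simp [hx, hg0]
  · simp only [splitChannel, ↓reduceIte, sum_const, card_univ, Fintype.card_fin, nsmul_eq_mul]
    field_simp

theorem push_splitChannel (Q : X → ℝ) : push Q (splitChannel n) = fun u => Q u.1 / n u.1 :=
  funext (sum_mul_splitChannel n Q)

variable {g : ℝ → ℝ} {d : ℝ}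

theorem maxGain_push_splitChannel_le (hgle : ∀ t ∈ Set.Icc (0:ℝ) 1, g t ≤ d * t) (hd : 0 ≤ d)
    {Q : X → ℝ} (hQ : ∀ x, 0 ≤ Q x) {N : ℕ} (hN : 0 < N) (hNn : ∀ x, N * Q x ≤ n x) :
    maxGain g (push Q (splitChannel n)) ≤ d * (N : ℝ)⁻¹ := by
  have hN' : (0 : ℝ) < N := Nat.cast_pos.2 hN
  rw [push_splitChannel]
  refine maxGain_le hgle hd (fun u => div_nonneg (hQ u.1) (Nat.cast_nonneg _)) (fun u => ?_)
    (inv_nonneg.2 hN'.le)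
  rw [div_le_iff₀ (Nat.cast_pos.2 u.2.pos), ← div_eq_inv_mul, le_div_iff₀ hN', mul_comm]
  exact hNn u.1

theorem mul_gain_le_maxGain_push_splitChannel (hgle : ∀ t ∈ Set.Icc (0:ℝ) 1, g t ≤ d * t)
    (hd : 0 ≤ d) (hg0 : g 0 = 0) (hn : ∀ x, n x ≠ 0) {Q : X → ℝ} (hQ : ∀ x, 0 ≤ Q x) (x : X) :
    Q x * g (n x)⁻¹ ≤ maxGain g (push Q (splitChannel n)) := by
  rw [push_splitChannel, ← sum_div_mul_splitChannel n hg0 Q x]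
  exact le_maxGain hgle hd (fun u => div_nonneg (hQ u.1) (Nat.cast_nonneg _))
    (isChannel_splitChannel n hn x)

theorem sum_mul_gain_le_maxGainFam_splitChannel {Y : Type*} [Fintype Y]
    (hgle : ∀ t ∈ Set.Icc (0:ℝ) 1, g t ≤ d * t) (hd : 0 ≤ d) (hg0 : g 0 = 0)
    (hn : ∀ x, n x ≠ 0) {P : X → Y → ℝ} (hP : ∀ x y, 0 ≤ P x y) (xs : Y → X) :
    ∑ y, P (xs y) y * g (n (xs y))⁻¹ ≤
      maxGainFam g (fun u y => ∑ x, splitChannel n x u * P x y) := by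
  have hR : (fun u y => ∑ x, splitChannel n x u * P x y) = fun u y => P u.1 y / n u.1 := by
    ext u y
    simp_rw [mul_comm (splitChannel n _ u)]
    exact sum_mul_splitChannel n (P · y) u
  rw [hR]
  calc _ = ∑ y, ∑ u, P u.1 y / n u.1 * g (splitChannel n (xs y) u) :=
        sum_congr rfl fun y _ => (sum_div_mul_splitChannel n hg0 (P · y) (xs y)).symm
    _ ≤ _ := le_maxGainFam hgle hd (fun u y => div_nonneg (hP u.1 y) (Nat.cast_nonneg _))
        fun y => isChannel_splitChannel n hn (xs y)

end Splitting

theorem sq_mul_le_gRatio_splitChannel {X Y : Type*} [Fintype X] [Fintype Y] [DecidableEq X]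
    [Nonempty X] {P : X → Y → ℝ} (hP : ∀ x y, 0 ≤ P x y) (hPX : ∀ x, 0 < ∑ y, P x y)
    {g : ℝ → ℝ} {d k : ℝ} (hgle : ∀ t ∈ Set.Icc (0:ℝ) 1, g t ≤ d * t) (hg0 : g 0 = 0)
    (hd : 0 < d) (hk : 0 < k) {N : ℕ} (hN : 0 < N) {n : X → ℕ}
    (hgn : ∀ x, d * k * (n x : ℝ)⁻¹ ≤ g (n x)⁻¹) (hkn : ∀ x, k * n x ≤ N * ∑ y, P x y)
    (hNn : ∀ x, N * ∑ y, P x y ≤ n x) :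
    k ^ 2 * ∑ y, univ.sup' univ_nonempty (fun x => P x y / ∑ y', P x y') ≤
      gRatio g P (splitChannel n) := by
  set Q : X → ℝ := fun x => ∑ y, P x y
  have hN' : (0 : ℝ) < N := Nat.cast_pos.2 hN
  have hn x : (0 : ℝ) < n x := (mul_pos hN' (hPX x)).trans_le (hNn x)
  have hn' x : n x ≠ 0 := Nat.cast_ne_zero.1 (hn x).ne'
  have hD_pos : 0 < maxGain g (push Q (splitChannel n)) := by
    let x := Classical.arbitrary X
    have := hn x
    exact (mul_pos (hPX x) ((by positivity : 0 < d * k * (n x : ℝ)⁻¹).trans_le (hgn x))).trans_le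
      (mul_gain_le_maxGain_push_splitChannel n hgle hd.le hg0 hn' (fun x => (hPX x).le) x)
  -- after seeing `y`, guess with the split of a maximizer of `P x y / Q x`
  choose xs hxs using fun y => exists_mem_eq_sup' univ_nonempty (fun x => P x y / Q x)
  have hterm y : d * k ^ 2 / N * univ.sup' univ_nonempty (fun x => P x y / Q x) ≤
      P (xs y) y * g (n (xs y))⁻¹ := by
    rw [(hxs y).2]
    set x := xs y
    have hkn' : k / (N * Q x) ≤ (n x : ℝ)⁻¹ := by
      rw [div_le_iff₀ (mul_pos hN' (hPX x)), inv_mul_eq_div, le_div_iff₀ (hn x)]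
      exact hkn x
    calc d * k ^ 2 / N * (P x y / Q x) = P x y * (d * k * (k / (N * Q x))) := by
          field_simp
      _ ≤ P x y * (d * k * (n x : ℝ)⁻¹) := by gcongr; exact hP x y
      _ ≤ P x y * g (n x)⁻¹ := mul_le_mul_of_nonneg_left (hgn x) (hP x y)
  set M := ∑ y, univ.sup' univ_nonempty (fun x => P x y / Q x) with hM
  have hM_nonneg : 0 ≤ M := sum_nonneg fun y _ => sup'_div_nonneg hP y
  have hN_ge : d * k ^ 2 / N * M ≤ maxGainFam g (fun u y => ∑ x, splitChannel n x u * P x y) :=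
    calc _ ≤ ∑ y, P (xs y) y * g (n (xs y))⁻¹ := by
          rw [hM, mul_sum]; exact sum_le_sum fun y _ => hterm y
      _ ≤ _ := sum_mul_gain_le_maxGainFam_splitChannel n hgle hd.le hg0 hn' hP xs
  calc k ^ 2 * M = d * k ^ 2 / N * M / (d * (N : ℝ)⁻¹) := by field_simp
    _ ≤ _ := div_le_div₀ ((by positivity : 0 ≤ d * k ^ 2 / N * M).trans hN_ge) hN_ge hD_pos
        (maxGain_push_splitChannel_le n hgle hd.le (fun x => (hPX x).le) hN hNn)

theorem exists_splitting_sizes {X : Type*} [Finite X] {Q : X → ℝ} (hQ : ∀ x, 0 < Q x)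
    {g : ℝ → ℝ} {d k : ℝ} (hgd : HasDerivWithinAt g d (Set.Ioi 0) 0) (hg0 : g 0 = 0)
    (hd : 0 < d) (hk0 : 0 ≤ k) (hk : k < 1) :
    ∃ N : ℕ, 0 < N ∧ ∃ n : X → ℕ, (∀ x, d * k * (n x : ℝ)⁻¹ ≤ g (n x)⁻¹) ∧
      (∀ x, k * n x ≤ N * Q x) ∧ ∀ x, N * Q x ≤ n x := by
  have hsmall := hgd.eventually_mul_lt hg0 (c := d * k) (by nlinarith)
  have hlarge : ∀ᶠ N : ℕ in atTop, 0 < N ∧ ∀ x,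
      d * k * ((⌈N * Q x⌉₊ : ℕ) : ℝ)⁻¹ < g ((⌈N * Q x⌉₊ : ℕ) : ℝ)⁻¹ ∧ k / (1 - k) ≤ N * Q x := by
    refine (eventually_gt_atTop 0).and (eventually_all.2 fun x => ?_)
    have hNQ : Tendsto (fun N : ℕ => (N : ℝ) * Q x) atTop atTop :=
      tendsto_natCast_atTop_atTop.atTop_mul_const (hQ x)
    have hceil : Tendsto (fun N : ℕ => ((⌈(N : ℝ) * Q x⌉₊ : ℕ) : ℝ)⁻¹) atTop (𝓝[>] 0) :=
      tendsto_inv_atTop_nhdsGT_zero.comp (tendsto_atTop_mono (fun N => Nat.le_ceil _) hNQ)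
    exact (hceil.eventually hsmall).and (hNQ.eventually (eventually_ge_atTop _))
  obtain ⟨N, hN, hx⟩ := hlarge.exists
  refine ⟨N, hN, fun x => ⌈N * Q x⌉₊, fun x => (hx x).1.le, fun x => ?_, fun x => Nat.le_ceil _⟩
  have hceil := Nat.ceil_lt_add_one (mul_nonneg (Nat.cast_nonneg N) (hQ x).le)
  have hkQ := (div_le_iff₀ (sub_pos.2 hk)).1 (hx x).2
  show k * ⌈N * Q x⌉₊ ≤ N * Q x
  nlinarith

/-- For any concave gain function `g : [0,1] → [0,∞)` with `g(0) = 0` and a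
finite nonzero derivative at `0`, the maximal `g`-leakage equals maximal leakage
`log ∑_y max_x P_{Y|X}(y|x)`. -/
theorem stmt2 {X Y : Type} [Fintype X] [Fintype Y] [Nonempty X]
    (P : X → Y → ℝ) (hP : IsPMF (fun z : X × Y => P z.1 z.2))
    (hPX : ∀ x, 0 < ∑ y, P x y)
    (g : ℝ → ℝ)
    (hgnn : ∀ t ∈ Set.Icc (0:ℝ) 1, 0 ≤ g t)
    (hgconc : ConcaveOn ℝ (Set.Icc (0:ℝ) 1) g)
    (hg0 : g 0 = 0)
    (d : ℝ) (hgd : HasDerivWithinAt g d (Set.Icc (0:ℝ) 1) 0) (hd : 0 < d) :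
    IsLUB
      {r : ℝ | ∃ (U : Type) (iU : Fintype U) (K : X → U → ℝ),
        @IsChannel X U iU K ∧
        r = Real.log (@gRatio X Y U inferInstance inferInstance iU g P K)}
      (Real.log (∑ y, Finset.univ.sup' Finset.univ_nonempty
        (fun x => P x y / ∑ y', P x y'))) := by
  classical
  have hPnn x y : 0 ≤ P x y := hP.1 (x, y)
  have hgle t (ht : t ∈ Set.Icc (0:ℝ) 1) : g t ≤ d * t :=
    hgconc.le_mul_of_hasDerivWithinAt (by simp) hg0 hgd ht ht.1
  set M := ∑ y, univ.sup' univ_nonempty (fun x => P x y / ∑ y', P x y')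
  have hM : 1 ≤ M := one_le_sum_sup'_div hPX
  refine ⟨?_, fun b hb => le_of_forall_pos_le_add fun ε hε => ?_⟩
  · rintro r ⟨U, iU, K, hK, rfl⟩
    exact Real.log_le_log_of_one_le (gRatio_nonneg hgnn hPnn hK)
      (gRatio_le_sum hgnn hgle hd.le hPnn (sup'_div_nonneg hPnn) (le_sup'_div_mul hPX) hK) hM
  · set k := Real.exp (-(ε / 2))
    obtain ⟨N, hN, n, hgn, hkn, hNn⟩ := exists_splitting_sizes hPX
      (hgd.mono_of_mem_nhdsWithin (Icc_mem_nhdsGT one_pos)) hg0 hd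
      (Real.exp_pos _).le (Real.exp_lt_one_iff.2 (by linarith) : k < 1)
    have hn x : n x ≠ 0 :=
      Nat.cast_ne_zero.1 ((mul_pos (Nat.cast_pos.2 hN) (hPX x)).trans_le (hNn x)).ne'
    have hratio :=
      sq_mul_le_gRatio_splitChannel hPnn hPX hgle hg0 hd (Real.exp_pos _) hN hgn hkn hNn
    have hb' := hb ⟨_, inferInstance, splitChannel n, isChannel_splitChannel n hn, rfl⟩
    calc Real.log M = Real.log (k ^ 2 * M) + ε := by
          rw [Real.log_mul (by positivity) (by positivity), Real.log_pow, Real.log_exp]; ring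
      _ ≤ b + ε := by gcongr; exact (Real.log_le_log (by positivity) hratio).trans hb'
end

section
/- Let P and Q be pmfs on a finite alphabet 𝒳 with Q(x)>0 for all x. Then D_∞(P‖Q) = sup over pmfs R on 𝒳 with R absolutely continuous with respect to P (i.e., R(x)>0 implies P(x)>0) of [ D(R‖Q) − D(R‖P) ], where D(·‖·) is the Kullback–Leibler divergence, and the supremum is attained at a point mass on any x* maximizing P(x)/Q(x). -/
/-!
For `R ≪ P` the two divergences share the entropy term of `R`, so `D(R‖Q) − D(R‖P)` is the
`R`-average of `log (P x / Q x)` over the support of `R`, hence at most its maximum `D_∞(P‖Q)`;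
a point mass at a maximizer of `P/Q` turns the average into that maximum.
-/

open Finset

/-- The Kullback–Leibler divergence `D(R‖S) = ∑_{x : R(x) > 0} R(x) log (R(x)/S(x))`. -/
noncomputable def KL {X : Type*} [Fintype X] (R S : X → ℝ) : ℝ :=
  ∑ x, if 0 < R x then R x * Real.log (R x / S x) else 0

/-- The Rényi divergence of order `∞`: `max_{x : P(x) > 0} log (P(x)/Q(x))`. -/
noncomputable def Dinf {X : Type*} [Fintype X] (P Q : X → ℝ) : ℝ :=
  sSup {v : ℝ | ∃ x, 0 < P x ∧ v = Real.log (P x / Q x)}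

section

variable {X : Type*} [Fintype X]

theorem IsPMF.exists_pos {p : X → ℝ} (hp : IsPMF p) : ∃ x, 0 < p x := by
  obtain ⟨x, -, hx⟩ := exists_ne_zero_of_sum_ne_zero (hp.2.symm ▸ one_ne_zero : ∑ a, p a ≠ 0)
  exact ⟨x, (hp.1 x).lt_of_ne' hx⟩

theorem isPMF_pointMass [DecidableEq X] (a : X) : IsPMF fun x => if x = a then (1 : ℝ) else 0 :=
  ⟨fun x => by by_cases h : x = a <;> simp [h], by simp⟩

theorem IsPMF.sum_ite_pos_mul_le {R f : X → ℝ} {M : ℝ} (hR : IsPMF R)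
    (hf : ∀ x, 0 < R x → f x ≤ M) : ∑ x, (if 0 < R x then R x * f x else 0) ≤ M :=
  calc ∑ x, (if 0 < R x then R x * f x else 0)
      ≤ ∑ x, R x * M := sum_le_sum fun x _ => by
        split_ifs with h
        · exact mul_le_mul_of_nonneg_left (hf x h) h.le
        · rw [le_antisymm (not_lt.mp h) (hR.1 x), zero_mul]
    _ = M := by rw [← sum_mul, hR.2, one_mul]

theorem KL_pointMass [DecidableEq X] (S : X → ℝ) (a : X) :
    KL (fun x => if x = a then 1 else 0) S = -Real.log (S a) := by
  rw [KL, sum_eq_single a (fun x _ hx => by simp [hx]) (fun h => absurd (mem_univ a) h)]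
  simp [Real.log_inv]

theorem KL_pointMass_sub_KL_pointMass [DecidableEq X] {P Q : X → ℝ} {a : X}
    (hP : P a ≠ 0) (hQ : Q a ≠ 0) :
    KL (fun x => if x = a then 1 else 0) Q - KL (fun x => if x = a then 1 else 0) P =
      Real.log (P a / Q a) := by
  rw [KL_pointMass, KL_pointMass, Real.log_div hP hQ]
  ring

theorem KL_sub_KL_eq_sum {R P Q : X → ℝ} (hP : ∀ x, 0 < R x → P x ≠ 0)
    (hQ : ∀ x, 0 < R x → Q x ≠ 0) :
    KL R Q - KL R P = ∑ x, if 0 < R x then R x * Real.log (P x / Q x) else 0 := by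
  rw [KL, KL, ← sum_sub_distrib]
  refine sum_congr rfl fun x _ => ?_
  split_ifs with h
  · rw [← mul_sub, Real.log_div h.ne' (hQ x h), Real.log_div h.ne' (hP x h),
      Real.log_div (hP x h) (hQ x h)]
    ring
  · ring

theorem finite_Dinf_set (P Q : X → ℝ) :
    {v : ℝ | ∃ x, 0 < P x ∧ v = Real.log (P x / Q x)}.Finite :=
  (Set.finite_range fun x => Real.log (P x / Q x)).subset fun _ ⟨x, _, hv⟩ => ⟨x, hv.symm⟩

theorem log_div_le_Dinf {P Q : X → ℝ} {x : X} (hx : 0 < P x) :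
    Real.log (P x / Q x) ≤ Dinf P Q :=
  le_csSup (finite_Dinf_set P Q).bddAbove ⟨x, hx, rfl⟩

theorem exists_Dinf_eq_log_div {P : X → ℝ} (hP : ∃ x, 0 < P x) (Q : X → ℝ) :
    ∃ x, 0 < P x ∧ Dinf P Q = Real.log (P x / Q x) := by
  obtain ⟨y, hy⟩ := hP
  have hne : {v : ℝ | ∃ x, 0 < P x ∧ v = Real.log (P x / Q x)}.Nonempty := ⟨_, y, hy, rfl⟩
  exact hne.csSup_mem (finite_Dinf_set P Q)

theorem Dinf_eq_log_div_of_le {P Q : X → ℝ} {a : X} (hQ : ∀ x, 0 < P x → 0 < Q x)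
    (ha : 0 < P a) (hmax : ∀ x, P x / Q x ≤ P a / Q a) :
    Dinf P Q = Real.log (P a / Q a) := by
  refine le_antisymm (csSup_le ⟨_, a, ha, rfl⟩ ?_) (log_div_le_Dinf ha)
  rintro _ ⟨x, hx, rfl⟩
  exact Real.log_le_log (div_pos hx (hQ x hx)) (hmax x)

end

theorem stmt5_general {X : Type} [Fintype X] [DecidableEq X]
    (P Q : X → ℝ) (hP : IsPMF P) (hQpos : ∀ x, 0 < Q x) :
    IsGreatest
      {v : ℝ | ∃ R : X → ℝ, IsPMF R ∧ (∀ x, 0 < R x → 0 < P x) ∧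
        v = KL R Q - KL R P}
      (Dinf P Q)
    ∧ ∀ xs : X, (∀ x, P x / Q x ≤ P xs / Q xs) →
        KL (fun x => if x = xs then 1 else 0) Q -
          KL (fun x => if x = xs then 1 else 0) P = Dinf P Q := by
  obtain ⟨xm, hxm, hDinf⟩ := exists_Dinf_eq_log_div hP.exists_pos Q
  refine ⟨⟨⟨_, isPMF_pointMass xm, fun x hx => ?_, ?_⟩, ?_⟩, fun xs hxs => ?_⟩
  · by_cases h : x = xm
    · exact h ▸ hxm
    · simp [h] at hx
  · rw [KL_pointMass_sub_KL_pointMass hxm.ne' (hQpos xm).ne', hDinf]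
  · rintro _ ⟨R, hR, hRP, rfl⟩
    rw [KL_sub_KL_eq_sum (fun x hx => (hRP x hx).ne') (fun x _ => (hQpos x).ne')]
    exact hR.sum_ite_pos_mul_le fun x hx => log_div_le_Dinf (hRP x hx)
  · have hpos : 0 < P xs :=
      (div_pos_iff_of_pos_right (hQpos xs)).mp ((div_pos hxm (hQpos xm)).trans_le (hxs xm))
    rw [KL_pointMass_sub_KL_pointMass hpos.ne' (hQpos xs).ne',
      Dinf_eq_log_div_of_le (fun x _ => hQpos x) hpos hxs]

/-- `D_∞(P‖Q) = sup_{R ≪ P} (D(R‖Q) − D(R‖P))`, the supremum being attained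
(hence `IsGreatest`), and in particular attained at the point mass on any `x*` maximizing
`P(x)/Q(x)`. -/
theorem stmt5 {X : Type} [Fintype X] [DecidableEq X]
    (P Q : X → ℝ) (hP : IsPMF P) (hQ : IsPMF Q) (hQpos : ∀ x, 0 < Q x) :
    IsGreatest
      {v : ℝ | ∃ R : X → ℝ, IsPMF R ∧ (∀ x, 0 < R x → 0 < P x) ∧
        v = KL R Q - KL R P}
      (Dinf P Q)
    ∧ ∀ xs : X, (∀ x, P x / Q x ≤ P xs / Q xs) →
        KL (fun x => if x = xs then 1 else 0) Q -
          KL (fun x => if x = xs then 1 else 0) P = Dinf P Q :=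
  stmt5_general P Q hP hQpos
end
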